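/- Let R be an almost sparse sequence embedded in a structure extending (ℤ;<,+) (nonstandard model), and let a, b be positive elements with a ≪ b (meaning S^m(a) < S^{-m}(b) for all m ∈ ℕ). Then for any operators A <_{ae} C <_{ae} B, one has A(b) < C(b) ± a < B(b); in particular b ± a ≈ b. -/

import Mathlib

open Filter

/-- Evaluation of an operator `A(x) = ∑ z_i S^i(x)` (given by a finitely supported
family of integer coefficients) at the n-th term of the sequence r, where
`S^i(r_n) = r_{n+i}` (clamped at index 0, matching the convention S⁻¹(r_0) = r_0). -/
def opEval (r : ℕ → ℤ) (A : ℤ →₀ ℤ) (n : ℕ) : ℤ :=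
  A.sum fun i c => c * r (((n : ℤ) + i).toNat)

/-- `A >_{ae} B` : A(a) > B(a) for all but finitely many a ∈ R. -/
def AEgt (r : ℕ → ℤ) (A B : ℤ →₀ ℤ) : Prop :=
  ∀ᶠ n in atTop, opEval r B n < opEval r A n

/-- `A =_{ae} B` : A(a) = B(a) for all but finitely many a ∈ R. -/
def AEeq (r : ℕ → ℤ) (A B : ℤ →₀ ℤ) : Prop :=
  ∀ᶠ n in atTop, opEval r A n = opEval r B n

/-- R is almost sparse: (1) any two operators are ae-comparable; (2) whenever
A >_{ae} B there is Δ ≥ 0 with A(S^Δ(x)) >_{ae} B(S^Δ(x)) + x. -/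
def AlmostSparse (r : ℕ → ℤ) : Prop :=
  (∀ A B : ℤ →₀ ℤ, AEgt r A B ∨ AEgt r B A ∨ AEeq r A B) ∧
  (∀ A B : ℤ →₀ ℤ, AEgt r A B →
    ∃ Δ : ℕ, ∀ᶠ n in atTop, opEval r B (n + Δ) + r n < opEval r A (n + Δ))

/-- Evaluation of an operator at an element of a nonstandard model, via the
family `shift : ℤ → U` of shifts S^i(b) of the element b. -/
def opAt {U : Type*} [AddCommGroup U] (shift : ℤ → U) (A : ℤ →₀ ℤ) : U :=
  A.sum fun i c => c • shift i

/-- The shifts S^i(b) of an element b, given the successor S and predecessor S⁻¹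
of the nonstandard model (with S^0(b) = b for b ∈ R^U). -/
def shiftOf {U : Type*} (Sf Si : U → U) (b : U) (i : ℤ) : U :=
  if 0 ≤ i then Sf^[i.toNat] b else Si^[(-i).toNat] b

/-!
Transfer the sparsity axiom to the nonstandard element: if `Y <_{ae} X`, then for some `Δ`
already `Y + S^{-Δ} <_{ae} X`, hence `Y(b) + S^{-Δ}(b) < X(b)`, and `a ≪ b` gives `a < S^{-Δ}(b)`.
Applied to `A <_{ae} C <_{ae} B` this gives `A(b) < C(b) - a` and `C(b) + a < B(b)`; applied to
`S^{-1} <_{ae} id <_{ae} S`, which holds as `r` is increasing, it gives `S^{-1}(b) < b ± a < S(b)`.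
-/

lemma opEval_add (r : ℕ → ℤ) (A B : ℤ →₀ ℤ) (n : ℕ) :
    opEval r (A + B) n = opEval r A n + opEval r B n :=
  Finsupp.sum_add_index' (fun _ => by simp) (fun _ _ _ => add_mul _ _ _)

lemma opEval_single (r : ℕ → ℤ) (i c : ℤ) (n : ℕ) :
    opEval r (Finsupp.single i c) n = c * r (((n : ℤ) + i).toNat) :=
  Finsupp.sum_single_index (by simp)

lemma opAt_add {U : Type*} [AddCommGroup U] (shift : ℤ → U) (A B : ℤ →₀ ℤ) :
    opAt shift (A + B) = opAt shift A + opAt shift B :=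
  Finsupp.sum_add_index' (fun _ => zero_smul _ _) (fun _ _ _ => add_smul _ _ _)

lemma opAt_single_one {U : Type*} [AddCommGroup U] (shift : ℤ → U) (i : ℤ) :
    opAt shift (Finsupp.single i 1) = shift i :=
  (Finsupp.sum_single_index (zero_smul ℤ (shift i))).trans (one_smul ℤ (shift i))

lemma shiftOf_neg_natCast {U : Type*} (Sf Si : U → U) (b : U) (k : ℕ) :
    shiftOf Sf Si b (-k) = Si^[k] b := by
  cases k with
  | zero => simp [shiftOf]
  | succ k => simp [shiftOf]; omega

lemma StrictMono.aegt_single_one {r : ℕ → ℤ} (hr : StrictMono r) {i j : ℤ} (hij : i < j) :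
    AEgt r (Finsupp.single j 1) (Finsupp.single i 1) := by
  refine eventually_atTop.mpr ⟨(-i).toNat, fun n hn => ?_⟩
  rw [opEval_single, opEval_single, one_mul, one_mul]
  exact hr (by omega)

lemma AlmostSparse.exists_aegt_add_single_neg {r : ℕ → ℤ} (hs : AlmostSparse r)
    {X Y : ℤ →₀ ℤ} (h : AEgt r X Y) :
    ∃ Δ : ℕ, AEgt r X (Y + Finsupp.single (-(Δ : ℤ)) 1) := by
  obtain ⟨Δ, hΔ⟩ := hs.2 X Y h
  obtain ⟨N, hN⟩ := eventually_atTop.mp hΔ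
  refine ⟨Δ, eventually_atTop.mpr ⟨N + Δ, fun n hn => ?_⟩⟩
  have hshift : ((n : ℤ) + -(Δ : ℤ)).toNat = n - Δ := by omega
  have hn' := hN (n - Δ) (by omega)
  rw [Nat.sub_add_cancel (by omega)] at hn'
  rwa [opEval_add, opEval_single, hshift, one_mul]

lemma AlmostSparse.opAt_add_lt_of_aegt {r : ℕ → ℤ} (hs : AlmostSparse r)
    {U : Type*} [AddCommGroup U] [LinearOrder U] [IsOrderedAddMonoid U] {shift : ℤ → U} {a : U}
    (htr : ∀ A B : ℤ →₀ ℤ, AEgt r A B → opAt shift B < opAt shift A)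
    (ha : ∀ Δ : ℕ, a < shift (-Δ)) {X Y : ℤ →₀ ℤ} (h : AEgt r X Y) :
    opAt shift Y + a < opAt shift X := by
  obtain ⟨Δ, hΔ⟩ := hs.exists_aegt_add_single_neg h
  calc opAt shift Y + a < opAt shift Y + shift (-Δ) := by gcongr; exact ha Δ
    _ = opAt shift (Y + Finsupp.single (-(Δ : ℤ)) 1) := by rw [opAt_add, opAt_single_one]
    _ < opAt shift X := htr _ _ hΔ

lemma le_iterate_of_forall_nonneg_le {U : Type*} [Preorder U] [Zero U] {f : U → U}
    (hf : ∀ x, 0 ≤ x → x ≤ f x) {a : U} (ha : 0 ≤ a) (k : ℕ) : a ≤ f^[k] a := by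
  induction k with
  | zero => rfl
  | succ k ih =>
    rw [Function.iterate_succ_apply']
    exact ih.trans (hf _ (ha.trans ih))

theorem stmt14_general (r : ℕ → ℤ) (hmono : StrictMono r) (hs : AlmostSparse r)
    {U : Type*} [AddCommGroup U] [LinearOrder U] [IsOrderedAddMonoid U] (Sf Si : U → U) (a b : U)
    (ha : 0 < a)
    (hSf : ∀ x : U, 0 ≤ x → x ≤ Sf x)
    (htr : ∀ A B : ℤ →₀ ℤ, AEgt r A B ↔
      opAt (shiftOf Sf Si b) B < opAt (shiftOf Sf Si b) A)
    (hll : ∀ m : ℕ, Sf^[m] a < Si^[m] b)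
    (A C B : ℤ →₀ ℤ) (hCA : AEgt r C A) (hBC : AEgt r B C) :
    (opAt (shiftOf Sf Si b) A < opAt (shiftOf Sf Si b) C + a ∧
      opAt (shiftOf Sf Si b) C + a < opAt (shiftOf Sf Si b) B) ∧
    (opAt (shiftOf Sf Si b) A < opAt (shiftOf Sf Si b) C - a ∧
      opAt (shiftOf Sf Si b) C - a < opAt (shiftOf Sf Si b) B) ∧
    (∃ m : ℕ, Si^[m] b < b + a ∧ b + a < Sf^[m] b) ∧
    (∃ m : ℕ, Si^[m] b < b - a ∧ b - a < Sf^[m] b) := by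
  have ha_lt : ∀ Δ : ℕ, a < shiftOf Sf Si b (-Δ) := fun Δ => by
    rw [shiftOf_neg_natCast]
    exact (le_iterate_of_forall_nonneg_le hSf ha.le Δ).trans_lt (hll Δ)
  have gap : ∀ {X Y}, AEgt r X Y → opAt (shiftOf Sf Si b) Y + a < opAt (shiftOf Sf Si b) X :=
    hs.opAt_add_lt_of_aegt (fun A B => (htr A B).mp) ha_lt
  have hAC := (htr C A).mp hCA
  have hCB := (htr B C).mp hBC
  have hAC_gap := gap hCA
  have hCB_gap := gap hBC
  have hb_succ : b + a < Sf b := by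
    simpa [opAt_single_one, shiftOf] using gap (hmono.aegt_single_one zero_lt_one)
  have hb_pred : Si b + a < b := by
    simpa [opAt_single_one, shiftOf] using gap (hmono.aegt_single_one (neg_lt_zero.mpr one_pos))
  refine ⟨⟨hAC.trans (lt_add_of_pos_right _ ha), hCB_gap⟩,
    ⟨lt_sub_iff_add_lt.mpr hAC_gap, (sub_lt_self _ ha).trans hCB⟩,
    ⟨1, ?_, hb_succ⟩, ⟨1, lt_sub_iff_add_lt.mpr hb_pred, ?_⟩⟩
  · exact ((lt_add_of_pos_right _ ha).trans hb_pred).trans (lt_add_of_pos_right _ ha)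
  · exact (sub_lt_self _ ha).trans ((lt_add_of_pos_right _ ha).trans hb_succ)

/-- In a saturated extension of (ℤ;<,+,R) with R almost sparse: if a, b are
positive, b (an element of R^U) is nonstandard and realizes the ae-type of the
sequence (the transfer hypothesis `htr`), and a ≪ b (∀ m, S^m(a) < S^{-m}(b)),
then for operators A <_{ae} C <_{ae} B we have A(b) < C(b) ± a < B(b); in
particular b ± a ≈ b. -/
theorem stmt14 (r : ℕ → ℤ) (hmono : StrictMono r) (hs : AlmostSparse r)
    {U : Type*} [AddCommGroup U] [LinearOrder U] [IsOrderedAddMonoid U] (Sf Si : U → U) (a b : U)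
    (ha : 0 < a) (hb : 0 < b)
    (hSf : ∀ x : U, 0 ≤ x → x ≤ Sf x)
    (htr : ∀ A B : ℤ →₀ ℤ, AEgt r A B ↔
      opAt (shiftOf Sf Si b) B < opAt (shiftOf Sf Si b) A)
    (hll : ∀ m : ℕ, Sf^[m] a < Si^[m] b)
    (A C B : ℤ →₀ ℤ) (hCA : AEgt r C A) (hBC : AEgt r B C) :
    (opAt (shiftOf Sf Si b) A < opAt (shiftOf Sf Si b) C + a ∧
      opAt (shiftOf Sf Si b) C + a < opAt (shiftOf Sf Si b) B) ∧
    (opAt (shiftOf Sf Si b) A < opAt (shiftOf Sf Si b) C - a ∧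
      opAt (shiftOf Sf Si b) C - a < opAt (shiftOf Sf Si b) B) ∧
    (∃ m : ℕ, Si^[m] b < b + a ∧ b + a < Sf^[m] b) ∧
    (∃ m : ℕ, Si^[m] b < b - a ∧ b - a < Sf^[m] b) :=
  stmt14_general r hmono hs Sf Si a b ha hSf htr hll A C B hCA hBC
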